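/- arXiv:2008.08554 — 3 statements merged into one kernel-verified Lean document; each statement's English description precedes it below -/
import Mathlib

section
/- Each of the 10 quadrics listed for n = 4, λ = (3,1) vanishes on all real symmetric 4×4 matrices of the form Q D Q^T where Q is orthogonal and D = diag(μ, μ, μ, ν). -/
/-!
Since `Q` is orthogonal, `Q diag(μ,μ,μ,ν) Qᵀ = μ • 1 + (ν - μ) • q qᵀ` with `q` the last column
of `Q`. Substituting `x i j = μ δᵢⱼ + (ν - μ) qᵢ qⱼ`, every one of the ten quadrics vanishes
identically as a polynomial in `μ`, `ν` and the entries of `q`.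
-/

open Matrix

section
variable {n R : Type*} [DecidableEq n]

theorem Matrix.diagonal_update_const [Ring R] (μ ν : R) (k : n) :
    diagonal (Function.update (fun _ => μ) k ν)
      = μ • 1 + (ν - μ) • vecMulVec (Pi.single k 1) (Pi.single k 1) := by
  rw [← single_eq_single_vecMulVec_single, smul_single, smul_eq_mul, mul_one, ← diagonal_single,
    smul_one_eq_diagonal, diagonal_add]
  congr 1
  ext i
  by_cases hi : i = k <;> simp [hi]

theorem Matrix.mul_diagonal_update_const_mul_transpose [Fintype n] [CommRing R]
    {Q : Matrix n n R} (hQ : Q * Qᵀ = 1) (μ ν : R) (k : n) :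
    Q * diagonal (Function.update (fun _ => μ) k ν) * Qᵀ
      = μ • 1 + (ν - μ) • vecMulVec (Q.col k) (Q.col k) := by
  rw [diagonal_update_const, Matrix.mul_add, Matrix.add_mul, Matrix.mul_smul, Matrix.smul_mul,
    Matrix.mul_one, hQ, Matrix.mul_smul, Matrix.smul_mul, mul_vecMulVec, vecMulVec_mul,
    mulVec_single_one, vecMul_transpose, mulVec_single_one]

end

/-- Each of the 10 quadrics listed for `n = 4`, `λ = (3,1)` vanishes on every real
symmetric 4×4 matrix of the form `Q D Qᵀ` with `Q` orthogonal and
`D = diag(μ,μ,μ,ν)`. Here `x i j` denotes the `(i,j)` entry of `A = Q D Qᵀ`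
(indices shifted by one relative to the paper). -/
theorem quadrics_vanish_on_V31 (μ ν : ℝ) (Q : Matrix (Fin 4) (Fin 4) ℝ)
    (horth : Qᵀ * Q = 1) :
    (let A := Q * diagonal ![μ, μ, μ, ν] * Qᵀ;
      let x11 := A 0 0; let x12 := A 0 1; let x13 := A 0 2; let x14 := A 0 3;
      let x22 := A 1 1; let x23 := A 1 2; let x24 := A 1 3;
      let x33 := A 2 2; let x34 := A 2 3; let x44 := A 3 3;
      -x12 * x34 + x13 * x24 = 0 ∧
      -x12 * x24 + x13 * x34 + x14 * x22 - x14 * x33 = 0 ∧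
      -x12 * x34 + x14 * x23 = 0 ∧
      x12 * x33 - x12 * x44 - x13 * x23 + x14 * x24 = 0 ∧
      -x12 * x23 + x13 * x22 - x13 * x44 + x14 * x34 = 0 ∧
      x11 * x34 - x13 * x14 - x22 * x34 + x23 * x24 = 0 ∧
      x11 * x24 - x12 * x14 + x23 * x34 - x24 * x33 = 0 ∧
      -x11 * x33 + x11 * x44 + x13 ^ 2 - x14 ^ 2 + x22 * x33 - x22 * x44
        - x23 ^ 2 + x24 ^ 2 = 0 ∧
      x11 * x23 - x12 * x13 - x23 * x44 + x24 * x34 = 0 ∧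
      -x11 * x22 + x11 * x44 + x12 ^ 2 - x14 ^ 2 + x22 * x33 - x23 ^ 2
        - x33 * x44 + x34 ^ 2 = 0) := by
  have hD : ![μ, μ, μ, ν] = Function.update (fun _ => μ) 3 ν := by
    ext i; fin_cases i <;> rfl
  rw [hD, mul_diagonal_update_const_mul_transpose (mul_eq_one_comm.mp horth)]
  simp only [Matrix.add_apply, Matrix.smul_apply, one_apply, vecMulVec_apply, col_apply, smul_eq_mul]
  simp only [Fin.reduceEq, if_true, if_false]
  refine ⟨?_, ?_, ?_, ?_, ?_, ?_, ?_, ?_, ?_, ?_⟩ <;> ring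
end

section
/- Each of the 7 cubics listed for n = 3, λ = (2,1) vanishes on every real symmetric 3×3 matrix with a repeated eigenvalue (i.e., of the form Q diag(μ,μ,ν) Q^T with Q orthogonal). -/
/-!
A symmetric matrix with spectrum `(μ, μ, ν)` is a rank-one perturbation of a scalar matrix:
`Q diag(μ, μ, ν) Qᵀ = μ I + (ν - μ) q qᵀ` with `q` the last column of `Q`. Its entries are
`μ δᵢⱼ + (ν - μ) qᵢ qⱼ`, and each of the seven cubics vanishes identically as a polynomial
in `μ`, `ν` and `q`.
-/

open Matrix

variable {n R : Type*} [Fintype n] [DecidableEq n] [CommRing R]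

theorem Matrix.mul_diagonal_single_mul_transpose (Q : Matrix n n R) (k : n) (t : R) :
    Q * diagonal (Pi.single k t) * Qᵀ = t • vecMulVec (Qᵀ k) (Qᵀ k) := by
  ext i j
  simp only [mul_apply, diagonal_apply, Pi.single_apply, mul_ite, mul_zero, ite_mul, zero_mul,
    Finset.sum_ite_eq', Finset.mem_univ, if_true, transpose_apply, smul_apply, vecMulVec_apply,
    smul_eq_mul]
  ring

theorem Matrix.mul_diagonal_update_mul_transpose {Q : Matrix n n R} (hQ : Q * Qᵀ = 1)
    (k : n) (μ ν : R) :
    Q * diagonal (Function.update (fun _ => μ) k ν) * Qᵀ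
      = μ • 1 + (ν - μ) • vecMulVec (Qᵀ k) (Qᵀ k) := by
  have hd : Function.update (fun _ => μ) k ν
      = fun i => μ + (Pi.single k (ν - μ) : n → R) i := by
    ext i
    by_cases hik : i = k <;> simp [hik]
  rw [hd, ← diagonal_add, ← smul_one_eq_diagonal, Matrix.mul_add, Matrix.add_mul,
    mul_diagonal_single_mul_transpose, Matrix.mul_smul, Matrix.mul_one, Matrix.smul_mul, hQ]

/-- Each of the 7 cubics listed for `n = 3`, `λ = (2,1)` vanishes on every real
symmetric 3×3 matrix with a repeated eigenvalue, i.e. of the form `Q diag(μ,μ,ν) Qᵀ`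
with `Q` orthogonal. Here `x i j` denotes the `(i,j)` entry of `A = Q diag(μ,μ,ν) Qᵀ`
(indices shifted by one relative to the paper). -/
theorem cubics_vanish_on_V21 (μ ν : ℝ) (Q : Matrix (Fin 3) (Fin 3) ℝ)
    (horth : Qᵀ * Q = 1) :
    (let A := Q * diagonal ![μ, μ, ν] * Qᵀ;
      let x11 := A 0 0; let x12 := A 0 1; let x13 := A 0 2;
      let x22 := A 1 1; let x23 := A 1 2; let x33 := A 2 2;
      -x11 * x13 * x22 + x11 * x13 * x33 + x12 ^ 2 * x13 - x12 * x22 * x23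
        + x12 * x23 * x33 - x13 ^ 3 + x13 * x22 ^ 2 - x13 * x22 * x33 = 0 ∧
      -x12 ^ 2 * x23 + x12 * x13 * x22 - x12 * x13 * x33 + x13 ^ 2 * x23 = 0 ∧
      -x11 * x13 * x23 + x12 * x13 ^ 2 - x12 * x23 ^ 2 + x13 * x22 * x23 = 0 ∧
      x11 * x12 * x23 - x11 * x13 * x22 + x11 * x13 * x33 - x12 * x22 * x23
        - x13 ^ 3 + x13 * x22 ^ 2 - x13 * x22 * x33 + x13 * x23 ^ 2 = 0 ∧
      -x11 * x12 * x22 + x11 * x12 * x33 - x11 * x13 * x23 + x12 ^ 3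
        + x12 * x22 * x33 - x12 * x23 ^ 2 - x12 * x33 ^ 2 + x13 * x23 * x33 = 0 ∧
      -x11 ^ 2 * x23 + x11 * x12 * x13 + x11 * x22 * x23 + x11 * x23 * x33
        - x12 ^ 2 * x23 - x12 * x13 * x33 - x22 * x23 * x33 + x23 ^ 3 = 0 ∧
      x11 ^ 2 * x22 - x11 ^ 2 * x33 - x11 * x12 ^ 2 + x11 * x13 ^ 2 - x11 * x22 ^ 2
        + x11 * x33 ^ 2 + x12 ^ 2 * x22 - x13 ^ 2 * x33 + x22 ^ 2 * x33
        - x22 * x23 ^ 2 - x22 * x33 ^ 2 + x23 ^ 2 * x33 = 0) := by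
  have hdiag : ![μ, μ, ν] = Function.update (fun _ => μ) 2 ν := by
    ext i; fin_cases i <;> rfl
  have hA := mul_diagonal_update_mul_transpose (mul_eq_one_comm.mp horth) 2 μ ν
  rw [← hdiag] at hA
  simp only [hA, Matrix.add_apply, Matrix.smul_apply, smul_eq_mul, one_apply, vecMulVec_apply,
    transpose_apply, Fin.reduceEq, if_true, if_false]
  refine ⟨by ring, by ring, by ring, by ring, by ring, by ring, by ring⟩
end

section
/- The sum over nonempty subsets formula for the Hilbert polynomial of the λ-diagonal subspace arrangement specializes so that its leading term gives degree n!/(λ_1!···λ_m!): that is, the polynomial h(t) = Σ_{i=1}^{⌈n/(n-m)⌉-1} (-1)^{i+1} C(N, i) C(t+n-1-i(n-m), n-1-i(n-m)), with N = n!/(λ_1!···λ_m!) and m < n, has degree m-1 in t and leading coefficient N/(m-1)!. -/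
/-!
The `i = 1` summand is `N/(m-1)!` times a monic polynomial of degree `n - 1 - (n - m) = m - 1`.
Every other summand has degree `n - 1 - i(n - m) < m - 1`, and the upper bound
`i ≤ ⌈n/(n-m)⌉ - 1` guarantees `i(n - m) ≤ n - 1`, so that this truncated subtraction is honest.
Hence the `i = 1` summand alone determines the degree and the leading coefficient.
-/

open Polynomial

namespace Polynomial

theorem natDegree_smul_monic_add_eq_and_leadingCoeff {S : Type*} [Semiring S]
    [Nontrivial S] [NoZeroDivisors S] {p q : S[X]} {c : S} {d : ℕ} (hc : c ≠ 0) (hp : p.Monic) (hpd : p.natDegree = d) (hq : q.degree < d) :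
    (c • p + q).natDegree = d ∧ (c • p + q).leadingCoeff = c := by
  have hcp : (c • p).degree = d := by
    rw [smul_eq_C_mul, degree_C_mul hc, degree_eq_natDegree hp.ne_zero, hpd]
  have hlt : q.degree < (c • p).degree := hcp ▸ hq
  refine ⟨?_, ?_⟩
  · rw [natDegree_add_eq_left_of_degree_lt hlt, natDegree_eq_of_degree_eq_some hcp]
  · rw [leadingCoeff_add_of_degree_lt' hlt, smul_eq_C_mul, leadingCoeff_mul, leadingCoeff_C,
      hp.leadingCoeff, mul_one]

variable {R : Type*} [Ring R] [Nontrivial R] [NoZeroDivisors R]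

theorem monic_descPochhammer_comp_X_add_C (d : ℕ) (a : R) :
    ((descPochhammer R d).comp (X + C a)).Monic :=
  (monic_descPochhammer R d).comp_X_add_C a

theorem natDegree_descPochhammer_comp_X_add_C (d : ℕ) (a : R) :
    ((descPochhammer R d).comp (X + C a)).natDegree = d := by
  rw [natDegree_comp, descPochhammer_natDegree, natDegree_X_add_C, mul_one]

end Polynomial

namespace Nat

theorem mul_le_sub_one_of_le_ceilDiv_sub_one {n k i : ℕ} (hi : i ≤ (n + k - 1) / k - 1) :
    i * k ≤ n - 1 :=
  calc i * k ≤ ((n + k - 1) / k - 1) * k := Nat.mul_le_mul_right k hi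
    _ = (n + k - 1) / k * k - k := by rw [Nat.sub_mul, one_mul]
    _ ≤ n + k - 1 - k := Nat.sub_le_sub_right (Nat.div_mul_le_self _ _) k
    _ = n - 1 := by omega

theorem one_le_ceilDiv_sub_one {n k : ℕ} (hk : 0 < k) (hkn : k < n) :
    1 ≤ (n + k - 1) / k - 1 := by
  have : 2 ≤ (n + k - 1) / k := by
    rw [Nat.le_div_iff_mul_le hk]
    omega
  omega

end Nat

theorem hilbert_polynomial_degree_and_leading_coeff_general (n m : ℕ) (lam : Fin m → ℕ)
    (hsum : ∑ i, lam i = n) (hmn : m < n) :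
    (let N : ℕ := n.factorial / ∏ i, (lam i).factorial;
     let h : Polynomial ℚ :=
       ∑ i ∈ Finset.Icc 1 ((n + (n - m) - 1) / (n - m) - 1),
         ((-1 : ℚ) ^ (i + 1) * (N.choose i : ℚ) /
             ((n - 1 - i * (n - m)).factorial : ℚ)) •
           ((descPochhammer ℚ (n - 1 - i * (n - m))).comp
             (X + C ((n - 1 - i * (n - m) : ℕ) : ℚ)));
     h.natDegree = m - 1 ∧ h.leadingCoeff = (N : ℚ) / ((m - 1).factorial : ℚ)) := by
  dsimp only
  set N := n.factorial / ∏ i, (lam i).factorial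
  have hm : 0 < m := Nat.pos_of_ne_zero fun hm0 => by subst hm0; rw [Fin.sum_univ_zero] at hsum; omega
  have hN : 0 < N := by
    simpa only [Nat.multinomial, hsum] using Nat.multinomial_pos Finset.univ lam
  have hd1 : n - 1 - 1 * (n - m) = m - 1 := by omega
  have hc1 : (-1 : ℚ) ^ (1 + 1) * (N.choose 1 : ℚ) / ((m - 1).factorial : ℚ) =
      (N : ℚ) / ((m - 1).factorial : ℚ) := by
    rw [Nat.choose_one_right]; ring
  rw [Finset.Icc_eq_cons_Ioc (Nat.one_le_ceilDiv_sub_one (by omega) (by omega)),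
    Finset.sum_cons, hd1, hc1]
  refine natDegree_smul_monic_add_eq_and_leadingCoeff (by positivity)
    (monic_descPochhammer_comp_X_add_C _ _) (natDegree_descPochhammer_comp_X_add_C _ _) ?_
  refine mem_degreeLT.mp (Submodule.sum_mem _ fun i hi => Submodule.smul_mem _ _ ?_)
  rw [Finset.mem_Ioc] at hi
  have hik : i * (n - m) ≤ n - 1 := Nat.mul_le_sub_one_of_le_ceilDiv_sub_one hi.2
  have h2k : 2 * (n - m) ≤ i * (n - m) := Nat.mul_le_mul_right _ hi.1
  rw [mem_degreeLT, degree_eq_natDegree (monic_descPochhammer_comp_X_add_C _ _).ne_zero,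
    natDegree_descPochhammer_comp_X_add_C, Nat.cast_lt]
  omega

/-- For a partition `λ = (λ₁,…,λ_m)` of `n` with `m < n`, set
`N = n!/(λ₁!⋯λ_m!)`. The Hilbert polynomial
`h(t) = Σ_{i=1}^{⌈n/(n-m)⌉-1} (-1)^{i+1} C(N,i) C(t+n-1-i(n-m), n-1-i(n-m))`
of the λ-diagonal subspace arrangement has degree `m-1` in `t` and leading
coefficient `N/(m-1)!`.  Here `C(t+d, d)` (with `d = n-1-i(n-m)`) is the binomial
coefficient polynomial `(t+d)(t+d-1)⋯(t+1)/d!`, expressed via `descPochhammer`. -/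
theorem hilbert_polynomial_degree_and_leading_coeff (n m : ℕ) (lam : Fin m → ℕ)
    (hpos : ∀ i, 0 < lam i) (hsum : ∑ i, lam i = n) (hmn : m < n) :
    (let N : ℕ := n.factorial / ∏ i, (lam i).factorial;
     let h : Polynomial ℚ :=
       ∑ i ∈ Finset.Icc 1 ((n + (n - m) - 1) / (n - m) - 1),
         ((-1 : ℚ) ^ (i + 1) * (N.choose i : ℚ) /
             ((n - 1 - i * (n - m)).factorial : ℚ)) •
           ((descPochhammer ℚ (n - 1 - i * (n - m))).comp
             (X + C ((n - 1 - i * (n - m) : ℕ) : ℚ)));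
     h.natDegree = m - 1 ∧ h.leadingCoeff = (N : ℚ) / ((m - 1).factorial : ℚ)) :=
  hilbert_polynomial_degree_and_leading_coeff_general n m lam hsum hmn
end
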